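/- Let G be a group acting by isometries on a 1-hyperbolic geodesic metric space (X,d) with base point x ∈ X, and let g, h ∈ G. Then there exist a point r ∈ X and geodesic segments such that: the broken path w_g = [x,r] ∪ [r,gx] has length at most |g|_x + 2; the broken path w_h = [gx,r] ∪ [r,ghx] has length at most |h|_x + 2; the broken path w_{gh} = [x,r] ∪ [r,ghx] has length at most |gh|_x + 2; and each of w_g, w_h, w_{gh} lies in the 2-neighborhood of any geodesic segment joining its endpoints. -/

import Mathlib

set_option linter.unusedVariables false

/-- A geodesic segment from `a` to `b`: the image of an isometric
parameterization of the interval `[0, dist a b]`. -/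
def IsGeodesicSegment {X : Type*} [MetricSpace X] (s : Set X) (a b : X) : Prop :=
  ∃ f : ℝ → X, f 0 = a ∧ f (dist a b) = b ∧
    (∀ t₁ ∈ Set.Icc (0 : ℝ) (dist a b), ∀ t₂ ∈ Set.Icc (0 : ℝ) (dist a b),
      dist (f t₁) (f t₂) = |t₁ - t₂|) ∧
    s = f '' Set.Icc (0 : ℝ) (dist a b)

/-- A geodesic metric space: any two points are joined by a geodesic segment. -/
def GeodesicSpace (X : Type*) [MetricSpace X] : Prop :=
  ∀ a b : X, ∃ s : Set X, IsGeodesicSegment s a b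

/-- `A` is contained in the `r`-neighborhood of `B`. -/
def InNbhd {X : Type*} [MetricSpace X] (A B : Set X) (r : ℝ) : Prop :=
  ∀ p ∈ A, ∃ q ∈ B, dist p q ≤ r

/-- `δ`-hyperbolicity: every geodesic triangle is `δ`-thin, i.e. each side is
contained in the `δ`-neighborhood of the union of the other two sides. -/
def DeltaHyperbolic (X : Type*) [MetricSpace X] (δ : ℝ) : Prop :=
  ∀ a b c : X, ∀ sab sac sbc : Set X,
    IsGeodesicSegment sab a b → IsGeodesicSegment sac a c → IsGeodesicSegment sbc b c →
    InNbhd sab (sac ∪ sbc) δ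

/-- Elementary Nielsen moves on an `n`-tuple of elements of a group. -/
inductive NielsenMove {G : Type*} [Group G] {n : ℕ} : (Fin n → G) → (Fin n → G) → Prop
  | inv (g : Fin n → G) (i : Fin n) : NielsenMove g (Function.update g i (g i)⁻¹)
  | mul (g : Fin n → G) (i j : Fin n) (hij : i ≠ j) :
      NielsenMove g (Function.update g i (g i * g j))
  | swap (g : Fin n → G) (i j : Fin n) (hij : i ≠ j) :
      NielsenMove g (g ∘ Equiv.swap i j)

/-- Nielsen equivalence: a finite chain of elementary Nielsen moves. -/
def NielsenEquiv {G : Type*} [Group G] {n : ℕ} (M M' : Fin n → G) : Prop :=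
  Relation.ReflTransGen NielsenMove M M'

/-- The word metric on the free group `F(x_1, …, x_n)`:
the length of the reduced word representing `w⁻¹ * v`. -/
noncomputable def freeDist {n : ℕ} (w v : FreeGroup (Fin n)) : ℝ :=
  ((w⁻¹ * v).toWord.length : ℝ)

/-- The orbit map (on the subgroup generated by the tuple `g`, identified with
a quotient of the free group via `FreeGroup.lift g`) is a quasi-isometric embedding
with respect to the word metric of the basis `g`. -/
def OrbitQIEmbed {G X : Type*} [Group G] [MetricSpace X] [MulAction G X]
    {n : ℕ} (x : X) (g : Fin n → G) : Prop :=
  ∃ lam eps : ℝ, 1 ≤ lam ∧ 0 ≤ eps ∧ ∀ w v : FreeGroup (Fin n),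
    lam⁻¹ * freeDist w v - eps ≤ dist ((FreeGroup.lift g w) • x) ((FreeGroup.lift g v) • x) ∧
    dist ((FreeGroup.lift g w) • x) ((FreeGroup.lift g v) • x) ≤ lam * freeDist w v + eps

/-- The sum of the displacements `|g_i|_x` of the members of a tuple. -/
noncomputable def tupleLen {G X : Type*} [Group G] [MetricSpace X] [MulAction G X]
    {n : ℕ} (x : X) (M : Fin n → G) : ℝ :=
  ∑ i, dist x (M i • x)

/-- A minimal tuple: `|M|_x ≤ |M'|_x + 1` for every Nielsen-equivalent tuple `M'`. -/
def MinimalTuple {G X : Type*} [Group G] [MetricSpace X] [MulAction G X]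
    {n : ℕ} (x : X) (M : Fin n → G) : Prop :=
  ∀ M' : Fin n → G, NielsenEquiv M M' → tupleLen x M ≤ tupleLen x M' + 1

/-- A freely reduced word in letters `(i, ±1)`: no letter is followed by its inverse. -/
def ReducedWord {n : ℕ} (l : List (Fin n × Bool)) : Prop :=
  l.Chain' fun a b => a.1 = b.1 → a.2 = b.2

/-- The element of `G` represented by a word in the tuple `g` and its inverses. -/
def wordProd {G : Type*} [Group G] {n : ℕ} (g : Fin n → G) (l : List (Fin n × Bool)) : G :=
  (l.map fun p => if p.2 then g p.1 else (g p.1)⁻¹).prod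

/-- Conclusion (2): for freely reduced `u = g_{i_1}^{ε_1} ⋯ g_{i_k}^{ε_k}`, any geodesic
`[x, ux]` lies in the `d`-neighborhood of the broken path
`[x, g_{i_1}^{ε_1} x] ∪ ⋯ ∪ g_{i_1}^{ε_1} ⋯ g_{i_{k-1}}^{ε_{k-1}} [x, g_{i_k}^{ε_k} x]`. -/
def BrokenPathNbhd {G X : Type*} [Group G] [MetricSpace X] [MulAction G X]
    {n : ℕ} (x : X) (g : Fin n → G) (d : ℝ) : Prop :=
  ∀ l : List (Fin n × Bool), l ≠ [] → ReducedWord l →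
    ∀ S : Set X, IsGeodesicSegment S x (wordProd g l • x) →
    ∀ seg : ℕ → Set X,
      (∀ j < l.length, IsGeodesicSegment (seg j)
        (wordProd g (l.take j) • x) (wordProd g (l.take (j + 1)) • x)) →
      ∀ p ∈ S, ∃ j < l.length, ∃ q ∈ seg j, dist p q ≤ d

/-- For freely reduced `u`, any geodesic `[x, ux]` lies in the
`max_i (|g_i|_x/2 + d)`-neighborhood of the orbit `Ux`. -/
def SegInOrbitNbhd {G X : Type*} [Group G] [MetricSpace X] [MulAction G X]
    {n : ℕ} (x : X) (g : Fin n → G) (d : ℝ) : Prop :=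
  ∀ l : List (Fin n × Bool), l ≠ [] → ReducedWord l →
    ∀ S : Set X, IsGeodesicSegment S x (wordProd g l • x) →
    ∀ p ∈ S, ∃ (w : FreeGroup (Fin n)) (i : Fin n),
      dist p ((FreeGroup.lift g w) • x) ≤ dist x (g i • x) / 2 + d

/-- Conclusion (3): for freely reduced `u = g_{i_1}^{ε_1} ⋯ g_{i_k}^{ε_k}` one has
`|u|_x ≥ |g_{i_j}|_x - d` for every letter occurring in `u`. -/
def LetterBound {G X : Type*} [Group G] [MetricSpace X] [MulAction G X]
    {n : ℕ} (x : X) (g : Fin n → G) (d : ℝ) : Prop :=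
  ∀ l : List (Fin n × Bool), ReducedWord l → ∀ j : Fin l.length,
    dist x (g (l.get j).1 • x) - d ≤ dist x (wordProd g l • x)

/-- Conclusion (4): every subsegment of a geodesic `[x, ux]`, `u ∈ U`, of length
greater than `d₄` meets the `max_i (|g_i|_x/2 - c)`-neighborhood of the orbit `Ux`. -/
def SubsegMeetsOrbit {G X : Type*} [Group G] [MetricSpace X] [MulAction G X]
    {n : ℕ} (x : X) (g : Fin n → G) (d₄ c : ℝ) : Prop :=
  ∀ w : FreeGroup (Fin n), ∀ S : Set X, IsGeodesicSegment S x ((FreeGroup.lift g w) • x) →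
    ∀ a ∈ S, ∀ b ∈ S, ∀ τ : Set X, IsGeodesicSegment τ a b → τ ⊆ S → d₄ < dist a b →
    ∃ p ∈ τ, ∃ (v : FreeGroup (Fin n)) (i : Fin n),
      dist p ((FreeGroup.lift g v) • x) ≤ dist x (g i • x) / 2 - c

/-- The dichotomy of Theorem 11 for an `(m+1)`-tuple `f` at base point `x`, with
constants `d₁, d₂, d₃, d₄` and parameter `c`. -/
def Thm11Alt {G X : Type*} [Group G] [MetricSpace X] [MulAction G X]
    {m : ℕ} (x : X) (f : Fin (m + 1) → G) (d₁ d₂ d₃ d₄ c : ℝ) : Prop :=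
  (∃ f' : Fin (m + 1) → G, NielsenEquiv f f' ∧ (⨅ y : X, dist y (f' 0 • y)) ≤ d₁) ∨
  (Function.Injective ⇑(FreeGroup.lift f) ∧ OrbitQIEmbed x f ∧ BrokenPathNbhd x f d₂ ∧
    SegInOrbitNbhd x f d₂ ∧ LetterBound x f d₃ ∧ SubsegMeetsOrbit x f d₄ c)

/-- A naturally parameterized `(λ, ε)`-quasigeodesic on the set `I ⊆ ℝ`. -/
def IsQuasigeodesicOn {X : Type*} [MetricSpace X] (α : ℝ → X) (I : Set ℝ)
    (lam eps : ℝ) : Prop :=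
  (∀ s ∈ I, ∀ t ∈ I, dist (α s) (α t) ≤ |s - t|) ∧
  (∀ s ∈ I, ∀ t ∈ I, |s - t| ≤ lam * dist (α s) (α t) + eps)

/-- A naturally parameterized `T`-local `(λ, ε)`-quasigeodesic on the set `I ⊆ ℝ`. -/
def IsLocalQuasigeodesicOn {X : Type*} [MetricSpace X] (α : ℝ → X) (I : Set ℝ)
    (T lam eps : ℝ) : Prop :=
  (∀ s ∈ I, ∀ t ∈ I, dist (α s) (α t) ≤ |s - t|) ∧
  (∀ s ∈ I, ∀ t ∈ I, |s - t| ≤ T → |s - t| ≤ lam * dist (α s) (α t) + eps)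

/-- The data provided by Lemma 15 for the pair `(g, h)`: a point `r` together with
geodesic segments `[x,r]`, `[r,gx]`, `[r,ghx]` such that the broken paths
`w_g = [x,r] ∪ [r,gx]`, `w_h = [gx,r] ∪ [r,ghx]`, `w_{gh} = [x,r] ∪ [r,ghx]` have
lengths at most `|g|_x + 2`, `|h|_x + 2`, `|gh|_x + 2` respectively and each lies in
the `2`-neighborhood of any geodesic segment joining its endpoints. -/
def Lemma15Data {G X : Type*} [Group G] [MetricSpace X] [MulAction G X]
    (x : X) (g h : G) (r : X) (sxr srg srgh : Set X) : Prop :=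
  IsGeodesicSegment sxr x r ∧ IsGeodesicSegment srg r (g • x) ∧
  IsGeodesicSegment srgh r ((g * h) • x) ∧
  dist x r + dist r (g • x) ≤ dist x (g • x) + 2 ∧
  dist (g • x) r + dist r ((g * h) • x) ≤ dist x (h • x) + 2 ∧
  dist x r + dist r ((g * h) • x) ≤ dist x ((g * h) • x) + 2 ∧
  (∀ S : Set X, IsGeodesicSegment S x (g • x) → InNbhd (sxr ∪ srg) S 2) ∧
  (∀ S : Set X, IsGeodesicSegment S (g • x) ((g * h) • x) → InNbhd (srg ∪ srgh) S 2) ∧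
  (∀ S : Set X, IsGeodesicSegment S x ((g * h) • x) → InNbhd (sxr ∪ srgh) S 2)

/-- Conclusion (4) of Proposition 13, for products
`w = h₁ gₙ^{ε₁} h₂ gₙ^{ε₂} ⋯ hₗ gₙ^{εₗ} h_{l+1}` with `hᵢ ∈ H`. -/
def Prop13Four {G X : Type*} [Group G] [MetricSpace X] [MulAction G X]
    (x : X) (H : Subgroup G) (gn : G) (T L : ℝ) : Prop :=
  ∀ l : ℕ, 1 ≤ l → ∀ (h : ℕ → G) (e : ℕ → ℤ),
    (∀ i ≤ l, h i ∈ H) →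
    (∀ i < l, e i = 1 ∨ e i = -1) →
    (∀ i, 1 ≤ i → i < l → e (i - 1) = -(e i) → h i ≠ 1) →
    ∀ A : ℕ → G, A 0 = 1 → (∀ i < l, A (i + 1) = A i * h i * gn ^ (e i)) →
    ∀ S : Set X, IsGeodesicSegment S x ((A l * h l) • x) →
    ∀ a ∈ S, ∀ b ∈ S, ∀ I : Set X, IsGeodesicSegment I a b → I ⊆ S → 10 * T ≤ dist a b →
    ∃ u v : G,
      ((∃ j < l, u = A j * h j ∧ v = A j * h j * gn ^ (e j)) ∨
        (∃ j ≤ l, u = A j ∧ v = A j * h j)) ∧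
      ∃ Seg : Set X, IsGeodesicSegment Seg (u • x) (v • x) ∧
        ∃ a' ∈ Seg, ∃ b' ∈ Seg, ∃ τ : Set X, IsGeodesicSegment τ a' b' ∧ τ ⊆ Seg ∧
          T ≤ dist a' b' ∧ InNbhd τ I (2 * L + 100)

/-!
Take a geodesic `Γ = [gx, ghx]` and move along it from `gx` as long as the current point stays
`1`-close to every geodesic `[x, gx]`; let `r` be the last such point. Just beyond `r`, points of
`Γ` are far from some `[x, gx]`, so by thinness of the triangle `(x, gx, ghx)` they are `1`-close
to every `[x, ghx]`; by continuity so is `r`. Hence `r` lies within `1` of every geodesic joining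
the endpoints of each of the three broken paths, which gives the length bounds by the triangle
inequality and the `2`-neighbourhoods by thinness of the triangles with a short third side.
-/

section

open Set Metric

variable {X : Type*} [MetricSpace X]

theorem isGeodesicSegment_image_Icc {f : ℝ → X} {s t : ℝ} (hst : s ≤ t)
    (hf : ∀ u ∈ Icc s t, ∀ v ∈ Icc s t, dist (f u) (f v) = |u - v|) :
    IsGeodesicSegment (f '' Icc s t) (f s) (f t) := by
  have hdist : dist (f s) (f t) = t - s := by
    rw [hf s (left_mem_Icc.2 hst) t (right_mem_Icc.2 hst), abs_sub_comm,
      abs_of_nonneg (sub_nonneg.2 hst)]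
  have hshift : (fun u => s + u) '' Icc 0 (t - s) = Icc s t := by
    rw [image_const_add_Icc, add_zero, add_sub_cancel]
  refine ⟨fun u => f (s + u), by simp, by simp [hdist], ?_, ?_⟩
  · intro u hu v hv
    rw [hdist] at hu hv
    rw [hf _ (hshift ▸ mem_image_of_mem _ hu) _ (hshift ▸ mem_image_of_mem _ hv),
      add_sub_add_left_eq_sub]
  · rw [hdist, ← hshift, image_image]

theorem continuousOn_of_dist_eq_abs {f : ℝ → X} {s : Set ℝ}
    (hf : ∀ u ∈ s, ∀ v ∈ s, dist (f u) (f v) = |u - v|) : ContinuousOn f s :=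
  (LipschitzOnWith.of_dist_le_mul (K := 1) fun u hu v hv => by
    rw [hf u hu v hv, NNReal.coe_one, one_mul, Real.dist_eq]).continuousOn

namespace IsGeodesicSegment

variable {S : Set X} {a b : X}

theorem right_mem (hS : IsGeodesicSegment S a b) : b ∈ S := by
  obtain ⟨f, -, hfb, -, rfl⟩ := hS
  exact ⟨dist a b, right_mem_Icc.2 dist_nonneg, hfb⟩

theorem symm (hS : IsGeodesicSegment S a b) : IsGeodesicSegment S b a := by
  obtain ⟨f, hfa, hfb, hf, rfl⟩ := hS
  have hrev : (fun u => dist a b - u) '' Icc 0 (dist a b) = Icc 0 (dist a b) := by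
    rw [image_const_sub_Icc, sub_self, sub_zero]
  have key := isGeodesicSegment_image_Icc (f := fun u => f (dist a b - u)) dist_nonneg
    (fun u hu v hv => by
      rw [hf _ (hrev ▸ mem_image_of_mem _ hu) _ (hrev ▸ mem_image_of_mem _ hv),
        sub_sub_sub_cancel_left, abs_sub_comm])
  have himage : (fun u => f (dist a b - u)) '' Icc 0 (dist a b) = f '' Icc 0 (dist a b) := by
    conv_rhs => rw [← hrev, image_image]
  simpa only [sub_zero, sub_self, hfa, hfb, himage] using key

theorem left_mem (hS : IsGeodesicSegment S a b) : a ∈ S :=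
  hS.symm.right_mem

theorem exists_split (hS : IsGeodesicSegment S a b) {r : X} (hr : r ∈ S) :
    ∃ S₁ S₂ : Set X, IsGeodesicSegment S₁ a r ∧ IsGeodesicSegment S₂ r b ∧ S₁ ⊆ S ∧ S₂ ⊆ S := by
  obtain ⟨f, hfa, hfb, hf, rfl⟩ := hS
  obtain ⟨t, ht, rfl⟩ := hr
  have hsub {u v : ℝ} (hu : 0 ≤ u) (hv : v ≤ dist a b) : Icc u v ⊆ Icc 0 (dist a b) :=
    Icc_subset_Icc hu hv
  refine ⟨f '' Icc 0 t, f '' Icc t (dist a b), ?_, ?_, image_mono (hsub le_rfl ht.2),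
    image_mono (hsub ht.1 le_rfl)⟩
  · simpa only [hfa] using isGeodesicSegment_image_Icc ht.1
      (fun u hu v hv => hf u (hsub le_rfl ht.2 hu) v (hsub le_rfl ht.2 hv))
  · simpa only [hfb] using isGeodesicSegment_image_Icc ht.2
      (fun u hu v hv => hf u (hsub ht.1 le_rfl hu) v (hsub ht.1 le_rfl hv))

theorem dist_add_dist_eq (hS : IsGeodesicSegment S a b) {q : X} (hq : q ∈ S) :
    dist a q + dist q b = dist a b := by
  obtain ⟨f, hfa, hfb, hf, rfl⟩ := hS
  obtain ⟨t, ht, rfl⟩ := hq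
  have h0 := left_mem_Icc.2 (dist_nonneg (x := a) (y := b))
  have hD := right_mem_Icc.2 (dist_nonneg (x := a) (y := b))
  have hat := hf 0 h0 t ht
  have htb := hf t ht _ hD
  rw [hfa] at hat
  rw [hfb] at htb
  rw [hat, htb, zero_sub, abs_neg, abs_of_nonneg ht.1, abs_sub_comm,
    abs_of_nonneg (sub_nonneg.2 ht.2), add_sub_cancel]

theorem dist_add_dist_le (hS : IsGeodesicSegment S a b) {q : X} (hq : q ∈ S) (r : X) :
    dist a r + dist r b ≤ dist a b + 2 * dist r q := by
  linarith [hS.dist_add_dist_eq hq, dist_triangle a q r, dist_triangle r q b, dist_comm q r]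

theorem isCompact (hS : IsGeodesicSegment S a b) : IsCompact S := by
  obtain ⟨f, -, -, hf, rfl⟩ := hS
  exact isCompact_Icc.image_of_continuousOn (continuousOn_of_dist_eq_abs hf)

theorem exists_dist_le_of_infDist_le (hS : IsGeodesicSegment S a b) {p : X} {ε : ℝ}
    (hp : infDist p S ≤ ε) : ∃ q ∈ S, dist p q ≤ ε := by
  obtain ⟨q, hq, hpq⟩ := hS.isCompact.exists_infDist_eq_dist ⟨a, hS.left_mem⟩ p
  exact ⟨q, hq, hpq ▸ hp⟩

end IsGeodesicSegment

theorem isGeodesicSegment_singleton (a : X) : IsGeodesicSegment {a} a a := by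
  simpa using isGeodesicSegment_image_Icc (f := fun _ : ℝ => a) (le_refl (0 : ℝ))
    fun u hu v hv => by
      rw [Icc_self, mem_singleton_iff] at hu hv
      simp [hu, hv]

namespace DeltaHyperbolic

variable {δ : ℝ}

theorem nonneg (hX : DeltaHyperbolic X δ) (a : X) : 0 ≤ δ := by
  obtain ⟨q, -, hq⟩ := hX a a a {a} {a} {a} (isGeodesicSegment_singleton a)
    (isGeodesicSegment_singleton a) (isGeodesicSegment_singleton a) a rfl
  exact dist_nonneg.trans hq

theorem inNbhd_of_same_endpoints (hX : DeltaHyperbolic X δ) {S₁ S₂ : Set X} {a b : X}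
    (h₁ : IsGeodesicSegment S₁ a b) (h₂ : IsGeodesicSegment S₂ a b) : InNbhd S₁ S₂ δ := by
  intro p hp
  obtain ⟨q, hq | rfl, hpq⟩ := hX a b b S₁ S₂ {b} h₁ h₂ (isGeodesicSegment_singleton b) p hp
  · exact ⟨q, hq, hpq⟩
  · exact ⟨_, h₂.right_mem, hpq⟩

theorem inNbhd_of_dist_le (hX : DeltaHyperbolic X δ) (hgeo : GeodesicSpace X) {s S : Set X}
    {a b c q : X} {ε : ℝ} (hs : IsGeodesicSegment s a b) (hS : IsGeodesicSegment S a c)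
    (hq : q ∈ S) (hbq : dist b q ≤ ε) : InNbhd s S (δ + ε) := by
  obtain ⟨Saq, -, hSaq, -, hSaqS, -⟩ := hS.exists_split hq
  obtain ⟨β, hβ⟩ := hgeo b q
  intro p hp
  obtain ⟨p', hp' | hp', hpp'⟩ := hX a b q s Saq β hs hSaq hβ p hp
  · exact ⟨p', hSaqS hp', by linarith [dist_nonneg.trans hbq]⟩
  · refine ⟨q, hq, ?_⟩
    linarith [dist_triangle p p' q, hβ.dist_add_dist_eq hp', dist_nonneg (x := b) (y := p')]

theorem inNbhd_union_of_dist_le (hX : DeltaHyperbolic X δ) (hgeo : GeodesicSpace X)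
    {s₁ s₂ S : Set X} {a b q r : X} {ε : ℝ} (hS : IsGeodesicSegment S a b) (hq : q ∈ S)
    (hrq : dist r q ≤ ε) (h₁ : IsGeodesicSegment s₁ a r) (h₂ : IsGeodesicSegment s₂ r b) :
    InNbhd (s₁ ∪ s₂) S (δ + ε) := by
  rintro p (hp | hp)
  · exact hX.inNbhd_of_dist_le hgeo h₁ hS hq hrq p hp
  · exact hX.inNbhd_of_dist_le hgeo h₂.symm hS.symm hq hrq p hp

theorem exists_mem_near_geodesics (hX : DeltaHyperbolic X δ) {Γ : Set X} {a b c : X}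
    (hΓ : IsGeodesicSegment Γ b c) :
    ∃ r ∈ Γ, (∀ S, IsGeodesicSegment S a b → ∃ q ∈ S, dist r q ≤ δ) ∧
      (∀ S, IsGeodesicSegment S a c → ∃ q ∈ S, dist r q ≤ δ) := by
  obtain ⟨k, hkb, hkc, hk, rfl⟩ := id hΓ
  set L := dist b c
  have hkΓ {w : ℝ} (hw : w ∈ Icc 0 L) : k w ∈ k '' Icc 0 L := mem_image_of_mem k hw
  have hclosed (S : Set X) : IsClosed (Icc 0 L ∩ (fun w => infDist (k w) S) ⁻¹' Iic δ) :=
    ((continuous_infDist_pt S).comp_continuousOn (continuousOn_of_dist_eq_abs hk)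
      ).preimage_isClosed_of_isClosed isClosed_Icc isClosed_Iic
  set W := Icc 0 L ∩ ⋂ (S : Set X) (_ : IsGeodesicSegment S a b),
    Icc 0 L ∩ (fun w => infDist (k w) S) ⁻¹' Iic δ
  have hmemW {w : ℝ} :
      w ∈ W ↔ w ∈ Icc 0 L ∧ ∀ S, IsGeodesicSegment S a b → infDist (k w) S ≤ δ := by
    simp only [W, mem_inter_iff, mem_iInter, mem_preimage, mem_Iic]
    exact and_congr_right fun hw => forall₂_congr fun _ _ => and_iff_right hw
  have hWclosed : IsClosed W :=
    isClosed_Icc.inter (isClosed_biInter fun S _ => hclosed S)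
  have h0W : (0 : ℝ) ∈ W := hmemW.2 ⟨left_mem_Icc.2 dist_nonneg, fun S hS => by
    rw [hkb, infDist_zero_of_mem hS.right_mem]
    exact hX.nonneg a⟩
  have hWbdd : BddAbove W := ⟨L, fun w hw => (hmemW.1 hw).1.2⟩
  obtain ⟨hw₁L, hw₁b⟩ := hmemW.1 (hWclosed.csSup_mem ⟨0, h0W⟩ hWbdd)
  set w₁ := sSup W
  refine ⟨k w₁, hkΓ hw₁L, fun S hS => hS.exists_dist_le_of_infDist_le (hw₁b S hS),
    fun S hS => hS.exists_dist_le_of_infDist_le ?_⟩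
  rcases hw₁L.2.eq_or_lt with hL | hL
  · rw [hL, hkc, infDist_zero_of_mem hS.right_mem]
    exact hX.nonneg a
  have hbeyond : Ioc w₁ L ⊆ Icc 0 L ∩ (fun w => infDist (k w) S) ⁻¹' Iic δ := by
    intro w hw
    have hwL : w ∈ Icc 0 L := ⟨hw₁L.1.trans hw.1.le, hw.2⟩
    obtain ⟨S', hS', hfar⟩ : ∃ S', IsGeodesicSegment S' a b ∧ δ < infDist (k w) S' := by
      have hwW : w ∉ W := fun h => (le_csSup hWbdd h).not_gt hw.1
      simpa [hmemW, hwL] using hwW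
    obtain ⟨q, hq | hq, hwq⟩ := hX b c a _ S' S hΓ hS'.symm hS.symm (k w) (hkΓ hwL)
    · exact absurd ((infDist_le_dist_of_mem hq).trans hwq) hfar.not_ge
    · exact ⟨hwL, (infDist_le_dist_of_mem hq).trans hwq⟩
  have hclosure := (hclosed S).closure_subset_iff.2 hbeyond
  rw [closure_Ioc hL.ne] at hclosure
  exact (hclosure (left_mem_Icc.2 hL.le)).2

end DeltaHyperbolic

end

/-- **Lemma 15.** For `g, h ∈ G` acting by isometries on a `1`-hyperbolic geodesic
space with base point `x`, there are a point `r` and geodesic segments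
`s₁ = [x,r]`, `s₂ = [r,gx]`, `s₃ = [r,ghx]` such that the broken paths
`w_g = [x,r] ∪ [r,gx]`, `w_h = [gx,r] ∪ [r,ghx]`, `w_{gh} = [x,r] ∪ [r,ghx]` have
lengths at most `|g|_x + 2`, `|h|_x + 2`, `|gh|_x + 2` respectively, and each lies in
the `2`-neighborhood of any geodesic segment joining its endpoints. -/
theorem lemma15
    (G : Type*) [Group G] (X : Type*) [MetricSpace X] [MulAction G X]
    (hgeo : GeodesicSpace X) (hhyp : DeltaHyperbolic X 1)
    (hiso : ∀ (g : G) (a b : X), dist (g • a) (g • b) = dist a b)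
    (x : X) (g h : G) :
    ∃ (r : X) (sxr srg srgh : Set X), Lemma15Data x g h r sxr srg srgh := by
  obtain ⟨Γ, hΓ⟩ := hgeo (g • x) ((g * h) • x)
  obtain ⟨r, hrΓ, hr_g, hr_gh⟩ := hhyp.exists_mem_near_geodesics (a := x) hΓ
  obtain ⟨s₁, s₂, hs₁, hs₂, hs₁Γ, hs₂Γ⟩ := hΓ.exists_split hrΓ
  obtain ⟨sxr, hsxr⟩ := hgeo x r
  have length_le {c : X} (hr : ∀ S, IsGeodesicSegment S x c → ∃ q ∈ S, dist r q ≤ 1) :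
      dist x r + dist r c ≤ dist x c + 2 := by
    obtain ⟨S, hS⟩ := hgeo x c
    obtain ⟨q, hq, hrq⟩ := hr S hS
    linarith [hS.dist_add_dist_le hq r]
  have nbhd {c : X} {s : Set X} (hr : ∀ S, IsGeodesicSegment S x c → ∃ q ∈ S, dist r q ≤ 1)
      (hs : IsGeodesicSegment s r c) (S : Set X) (hS : IsGeodesicSegment S x c) :
      InNbhd (sxr ∪ s) S 2 := by
    obtain ⟨q, hq, hrq⟩ := hr S hS
    simpa only [one_add_one_eq_two] using hhyp.inNbhd_union_of_dist_le hgeo hS hq hrq hsxr hs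
  refine ⟨r, sxr, s₁, s₂, hsxr, hs₁.symm, hs₂, length_le hr_g, ?_, length_le hr_gh,
    nbhd hr_g hs₁.symm, ?_, nbhd hr_gh hs₂⟩
  · rw [hΓ.dist_add_dist_eq hrΓ, mul_smul, hiso]
    linarith
  · intro S hS p hp
    obtain ⟨q, hq, hpq⟩ :=
      hhyp.inNbhd_of_same_endpoints hΓ hS p (Set.union_subset hs₁Γ hs₂Γ hp)
    exact ⟨q, hq, by linarith⟩
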